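/- arXiv:1707.00549 — 6 statements merged into one kernel-verified Lean document; each statement's English description precedes it below -/
import Mathlib

section
/- Let q = 5^k and let U = {x in F_{q^2} : x^{q+1} = 1}. Then the equation y^2 - y + 1 = 0 has no solution in U if k is even, and has exactly two solutions in U if k is odd. -/
theorem stmt_9 (k : ℕ) (hk : 0 < k) (F : Type*) [Field F] [Fintype F]
    (hF : Fintype.card F = (5 ^ k) ^ 2) :
    (Even k → ∀ y : F, y ^ (5 ^ k + 1) = 1 → y ^ 2 - y + 1 ≠ 0) ∧
    (Odd k → {y : F | y ^ (5 ^ k + 1) = 1 ∧ y ^ 2 - y + 1 = 0}.ncard = 2) := by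
  -- characteristic 5
  have h5 : (5 : F) = 0 := by
    have hc := FiniteField.cast_card_eq_zero F
    rw [hF] at hc
    push_cast at hc
    have h1 : (5 : F) ^ k = 0 := by
      exact pow_eq_zero_iff (two_ne_zero) |>.mp hc
    exact pow_eq_zero_iff hk.ne' |>.mp h1
  have h3ne : (3 : F) ≠ 0 := by
    intro h3
    have h2 : (2 : F) = 0 := by linear_combination h5 - h3
    have : (1 : F) = 0 := by linear_combination h3 - h2
    exact one_ne_zero this
  have hchar : ringChar F = 5 := by
    haveI := ringChar.charP F
    have hdvd : ringChar F ∣ 5 := by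
      apply ringChar.dvd
      exact_mod_cast h5
    rcases (Nat.Prime.eq_one_or_self_of_dvd (by norm_num) _ hdvd) with h1 | h1
    · exfalso
      have := CharP.cast_eq_zero F (ringChar F)
      rw [h1] at this
      simp at this
    · exact h1
  constructor
  · -- even case
    rintro ⟨j, rfl⟩ y hyU hy
    have hy3 : y ^ 3 = -1 := by linear_combination (y + 1) * hy
    have hmod : 5 ^ (j + j) % 3 = 1 := by
      have h1 : (5:ℕ) ^ (j + j) = 25 ^ j := by
        rw [pow_add, ← mul_pow]; norm_num
      rw [h1]
      have := Nat.ModEq.pow j (by decide : (25:ℕ) ≡ 1 [MOD 3])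
      simpa [Nat.ModEq] using this
    obtain ⟨t, ht⟩ : ∃ t, 5 ^ (j + j) = 3 * t + 1 := ⟨5 ^ (j + j) / 3, by omega⟩
    have he : 5 ^ (j + j) + 1 = 3 * t + 2 := by omega
    rw [he, pow_add, pow_mul, hy3] at hyU
    rcases Nat.even_or_odd t with hev | hod
    · rw [hev.neg_one_pow, one_mul] at hyU
      have : (3 : F) = 0 := by linear_combination (y + 2) * hy - (y + 1) * hyU
      exact h3ne this
    · rw [hod.neg_one_pow] at hyU
      have hsq : y ^ 2 = -1 := by linear_combination -hyU
      have : (1 : F) = 0 := by linear_combination y * hy + (1 - y) * hsq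
      exact one_ne_zero this
  · -- odd case
    rintro ⟨j, rfl⟩
    -- 6 ∣ 5^(2j+1) + 1
    have hmod : 5 ^ (2 * j + 1) % 6 = 5 := by
      have h1 : (5:ℕ) ^ (2 * j + 1) = 25 ^ j * 5 := by
        rw [pow_succ, pow_mul]; norm_num
      rw [h1]
      have h2 : 25 ^ j % 6 = 1 := by
        have := Nat.ModEq.pow j (by decide : (25:ℕ) ≡ 1 [MOD 6])
        simpa [Nat.ModEq] using this
      omega
    obtain ⟨m, hm⟩ : ∃ m, 5 ^ (2 * j + 1) + 1 = 6 * m := ⟨(5 ^ (2 * j + 1) + 1) / 6, by omega⟩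
    -- card ≡ 1 mod 8
    have hcard : Fintype.card F = 25 ^ (2 * j + 1) := by
      rw [hF, ← pow_mul, mul_comm, pow_mul]; norm_num
    have hc8 : Fintype.card F % 8 = 1 := by
      rw [hcard]
      have := Nat.ModEq.pow (2 * j + 1) (by decide : (25:ℕ) ≡ 1 [MOD 8])
      simpa [Nat.ModEq] using this
    obtain ⟨n, hn⟩ : ∃ n, Fintype.card F / 2 = 4 * n := ⟨Fintype.card F / 8, by omega⟩
    -- -3 is a square
    have hsq : IsSquare (-3 : F) := by
      rw [FiniteField.isSquare_iff (by rw [hchar]; norm_num)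
        (by simpa using h3ne : (-3 : F) ≠ 0)]
      have h81 : ((-3 : F)) ^ 4 = 1 := by linear_combination 16 * h5
      calc (-3 : F) ^ (Fintype.card F / 2) = ((-3 : F) ^ 4) ^ n := by
            rw [← pow_mul, hn]
        _ = 1 := by rw [h81, one_pow]
    obtain ⟨s, hs⟩ := hsq
    have hsne : s ≠ 0 := by
      intro h
      apply h3ne
      rw [h, mul_zero] at hs
      linear_combination -hs
    set a : F := 3 * (1 + s) with ha
    set b : F := 3 * (1 - s) with hb
    have hab : a ≠ b := by
      intro h
      apply hsne
      rw [ha, hb] at h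
      linear_combination h - s * h5
    have key : ∀ y : F, (2 * y - 1 - s) * (2 * y - 1 + s) = 4 * (y ^ 2 - y + 1) := by
      intro y; linear_combination hs
    have quada : a ^ 2 - a + 1 = 0 := by
      rw [ha]; linear_combination -9 * hs + (3 * s - 4) * h5
    have quadb : b ^ 2 - b + 1 = 0 := by
      rw [hb]; linear_combination -9 * hs + (-3 * s - 4) * h5
    have hord : ∀ y : F, y ^ 2 - y + 1 = 0 → y ^ (5 ^ (2 * j + 1) + 1) = 1 := by
      intro y hy
      have hy3 : y ^ 3 = -1 := by linear_combination (y + 1) * hy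
      have hy6 : y ^ 6 = 1 := by
        rw [show (6:ℕ) = 3 * 2 from rfl, pow_mul, hy3]; norm_num
      rw [hm, pow_mul, hy6, one_pow]
    have hset : {y : F | y ^ (5 ^ (2 * j + 1) + 1) = 1 ∧ y ^ 2 - y + 1 = 0} = {a, b} := by
      ext y
      simp only [Set.mem_setOf_eq, Set.mem_insert_iff, Set.mem_singleton_iff]
      constructor
      · rintro ⟨-, hy⟩
        have h4 : (2 * y - 1 - s) * (2 * y - 1 + s) = 0 := by rw [key, hy, mul_zero]
        rcases mul_eq_zero.mp h4 with h | h
        · left; rw [ha]; linear_combination 3 * h - y * h5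
        · right; rw [hb]; linear_combination 3 * h - y * h5
      · rintro (rfl | rfl)
        · exact ⟨hord a quada, quada⟩
        · exact ⟨hord b quadb, quadb⟩
    rw [hset]
    exact Set.ncard_pair hab
end

section
/- Let q = 3^k with k even, and f(x) = x^{2q+1} + x^{3q} - x^{q+2} over F_{q^2}. Then for every x in F_{q^2} \ F_q, f(x) lies in F_{q^2} \ F_q. -/
theorem stmt_12 (k : ℕ) (hk : 0 < k) (hke : Even k) (F : Type*) [Field F] [Fintype F]
    (hF : Fintype.card F = (3 ^ k) ^ 2) (x : F) (hx : x ^ (3 ^ k) ≠ x) :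
    (x ^ (2 * 3 ^ k + 1) + x ^ (3 * 3 ^ k) - x ^ (3 ^ k + 2)) ^ (3 ^ k) ≠
      x ^ (2 * 3 ^ k + 1) + x ^ (3 * 3 ^ k) - x ^ (3 ^ k + 2) := by
  -- characteristic 3
  obtain ⟨p, hp⟩ := CharP.exists F
  haveI := hp
  obtain ⟨n, hpp, hcard⟩ := FiniteField.card F p
  have hp3 : p = 3 := by
    have hdvd : p ∣ 3 ^ (k * 2) := by
      rw [show (3:ℕ) ^ (k*2) = (3^k)^2 by rw [pow_mul], ← hF, hcard]
      exact dvd_pow_self p n.2.ne'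
    have h' := Nat.Prime.dvd_of_dvd_pow hpp hdvd
    exact (Nat.prime_dvd_prime_iff_eq hpp (by norm_num)).1 h'
  subst hp3
  haveI : Fact (Nat.Prime 3) := ⟨by norm_num⟩
  have h3 : (3 : F) = 0 := by exact_mod_cast CharP.cast_eq_zero F 3
  intro h
  set y := x ^ (3 ^ k) with hy
  have hF' : Fintype.card F = 3 ^ k * 3 ^ k := by rw [hF]; ring
  have hx2 : x ^ (3 ^ k * 3 ^ k) = x := by
    calc x ^ (3 ^ k * 3 ^ k) = x ^ Fintype.card F := by rw [hF']
    _ = x := FiniteField.pow_card x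
  have hyq : y ^ (3 ^ k) = x := by rw [hy, ← pow_mul, hx2]
  -- rewrite f(x) in terms of x and y
  have e1 : x ^ (2 * 3 ^ k + 1) = y ^ 2 * x := by
    rw [show 2 * 3 ^ k + 1 = 3 ^ k * 2 + 1 by ring, pow_succ, pow_mul]
  have e2 : x ^ (3 * 3 ^ k) = y ^ 3 := by
    rw [show 3 * 3 ^ k = 3 ^ k * 3 by ring, pow_mul]
  have e3 : x ^ (3 ^ k + 2) = y * x ^ 2 := by rw [pow_add]
  rw [e1, e2, e3] at h
  have t1 : (y ^ 2 * x) ^ 3 ^ k = x ^ 2 * y := by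
    rw [mul_pow, ← pow_mul, show 2 * 3 ^ k = 3 ^ k * 2 by ring, pow_mul, hyq, ← hy]
  have t2 : (y ^ 3) ^ 3 ^ k = x ^ 3 := by
    rw [← pow_mul, show 3 * 3 ^ k = 3 ^ k * 3 by ring, pow_mul, hyq]
  have t3 : (y * x ^ 2) ^ 3 ^ k = x * y ^ 2 := by
    rw [mul_pow, hyq, ← pow_mul, show 2 * 3 ^ k = 3 ^ k * 2 by ring, pow_mul, ← hy]
  rw [sub_pow_char_pow, add_pow_char_pow, t1, t2, t3] at h
  -- h : x^2*y + x^3 - x*y^2 = y^2*x + y^3 - y*x^2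
  have key : (x - y) * (x ^ 2 + y ^ 2) = 0 := by
    linear_combination h + (x * y ^ 2 - x ^ 2 * y) * h3
  have hxney : x - y ≠ 0 := fun hc => hx (by linear_combination -hc)
  have hsum : y ^ 2 = -x ^ 2 := by
    rcases mul_eq_zero.1 key with h' | h'
    · exact absurd h' hxney
    · linear_combination h'
  have hx0 : x ≠ 0 := by
    intro hc
    apply hx
    rw [hy, hc, zero_pow (by positivity)]
  have hy0 : y ≠ 0 := by
    intro hc
    rw [hc] at hsum
    apply hx0
    have hxx : x ^ 2 = 0 := by linear_combination hsum
    exact pow_eq_zero_iff (n := 2) (by norm_num) |>.1 hxx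
  -- arithmetic: 3^k + 1 = 2*m with m odd
  obtain ⟨j, hj⟩ := hke
  have h9 : (3:ℕ) ^ k = 9 ^ j := by
    rw [hj, pow_add, ← mul_pow]; norm_num
  have hmod : 9 ^ j % 4 = 1 := by
    rw [Nat.pow_mod]; norm_num
  have hdm := Nat.div_add_mod (9 ^ j) 4
  set t := 9 ^ j / 4 with ht
  have hm : 3 ^ k + 1 = 2 * (2 * t + 1) := by rw [h9]; omega
  -- y^(3^k+1) two ways
  have w1 : y ^ (3 ^ k + 1) = x * y := by rw [pow_succ, hyq]
  have w2 : y ^ (3 ^ k + 1) = -(x * y) := by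
    rw [hm, pow_mul, hsum, Odd.neg_pow ⟨t, by ring⟩, ← pow_mul, ← hm, pow_succ, ← hy]
    ring
  have h2 : (2 : F) * (x * y) = 0 := by
    rw [w1] at w2; linear_combination w2
  have h2ne : (2 : F) ≠ 0 := by
    rw [show (2:F) = -1 by linear_combination h3]
    simp
  rcases mul_eq_zero.1 h2 with h' | h'
  · exact h2ne h'
  · rcases mul_eq_zero.1 h' with h'' | h''
    · exact hx0 h''
    · exact hy0 h''
end

section
/- Let q = 5^k with k even, and f(x) = x^{4q+1} + x^{5q} - x^{q+4} over F_{q^2}. Then for every x in F_{q^2} \ F_q, f(x) lies in F_{q^2} \ F_q. -/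
theorem stmt_13 (k : ℕ) (hk : 0 < k) (hke : Even k) (F : Type*) [Field F] [Fintype F]
    (hF : Fintype.card F = (5 ^ k) ^ 2) (x : F) (hx : x ^ (5 ^ k) ≠ x) :
    (x ^ (4 * 5 ^ k + 1) + x ^ (5 * 5 ^ k) - x ^ (5 ^ k + 4)) ^ (5 ^ k) ≠
      x ^ (4 * 5 ^ k + 1) + x ^ (5 * 5 ^ k) - x ^ (5 ^ k + 4) := by
  haveI hfact5 : Fact (Nat.Prime 5) := ⟨by norm_num⟩
  -- characteristic 5
  have hchar : CharP F 5 := by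
    obtain ⟨p, hp⟩ := CharP.exists F
    haveI := hp
    have hprime : p.Prime := CharP.char_is_prime F p
    haveI : Fact p.Prime := ⟨hprime⟩
    obtain ⟨n, _, hcard⟩ := FiniteField.card F p
    have hdvd : p ∣ 5 ^ (k * 2) := by
      have h : p ^ (n : ℕ) = 5 ^ (k * 2) := by
        rw [← hcard, hF, ← pow_mul]
      rw [← h]
      exact dvd_pow_self p (by exact_mod_cast n.ne_zero)
    have hp5 : p ∣ 5 := hprime.dvd_of_dvd_pow hdvd
    have hpe : p = 5 := (Nat.prime_dvd_prime_iff_eq hprime (by norm_num)).mp hp5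
    rwa [hpe] at hp
  haveI := hchar
  haveI : ExpChar F 5 := ExpChar.prime (by norm_num)
  intro hcon
  obtain ⟨y, hy⟩ : ∃ y : F, y = x ^ (5 ^ k) := ⟨_, rfl⟩
  have hx0 : x ≠ 0 := by
    rintro rfl
    exact hx (zero_pow (by positivity))
  have hxy : x ≠ y := by
    intro h
    exact hx (by rw [← hy, ← h])
  have hxq2 : x ^ (5 ^ k * 5 ^ k) = x := by
    have h : 5 ^ k * 5 ^ k = Fintype.card F := by rw [hF, pow_two]
    rw [h, FiniteField.pow_card]
  -- compute f and f^q
  have hf : x ^ (4 * 5 ^ k + 1) + x ^ (5 * 5 ^ k) - x ^ (5 ^ k + 4)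
      = y ^ 4 * x + y ^ 5 - y * x ^ 4 := by
    rw [pow_add, pow_mul', pow_one, pow_mul', pow_add, ← hy]
  have h1 : (x ^ (4 * 5 ^ k + 1)) ^ 5 ^ k = x ^ 4 * y := by
    rw [← pow_mul, show (4 * 5 ^ k + 1) * 5 ^ k = 5 ^ k * 5 ^ k * 4 + 5 ^ k by ring,
      pow_add, pow_mul, hxq2, ← hy]
  have h2 : (x ^ (5 * 5 ^ k)) ^ 5 ^ k = x ^ 5 := by
    rw [← pow_mul, show 5 * 5 ^ k * 5 ^ k = 5 ^ k * 5 ^ k * 5 by ring, pow_mul, hxq2]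
  have h3 : (x ^ (5 ^ k + 4)) ^ 5 ^ k = x * y ^ 4 := by
    rw [← pow_mul, show (5 ^ k + 4) * 5 ^ k = 5 ^ k * 5 ^ k + 5 ^ k * 4 by ring,
      pow_add, hxq2, pow_mul, ← hy]
  have hfq : (x ^ (4 * 5 ^ k + 1) + x ^ (5 * 5 ^ k) - x ^ (5 ^ k + 4)) ^ 5 ^ k
      = x ^ 4 * y + x ^ 5 - x * y ^ 4 := by
    rw [sub_pow_char_pow, add_pow_char_pow, h1, h2, h3]
  have hkey : x ^ 4 * y + x ^ 5 - x * y ^ 4 = y ^ 4 * x + y ^ 5 - y * x ^ 4 := by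
    rw [← hfq, hcon, hf]
  have h50 : (5 : F) = 0 := by exact_mod_cast CharP.cast_eq_zero F 5
  have hfac : (x - y) * (x ^ 2 - x * y + y ^ 2) ^ 2 = 0 := by
    linear_combination hkey + (-x ^ 4 * y + x ^ 3 * y ^ 2 - x ^ 2 * y ^ 3 + x * y ^ 4) * h50
  have hquad : x ^ 2 - x * y + y ^ 2 = 0 := by
    rcases mul_eq_zero.mp hfac with h | h
    · exact absurd (sub_eq_zero.mp h) hxy
    · exact pow_eq_zero_iff (n := 2) (by norm_num) |>.mp h
  -- x^6 = y^6
  have hsix : x ^ 6 = y ^ 6 := by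
    have hcube : x ^ 3 + y ^ 3 = 0 := by linear_combination (x + y) * hquad
    linear_combination (x ^ 3 - y ^ 3) * hcube
  -- norm equality
  have hnorm : x ^ (5 ^ k + 1) = y ^ (5 ^ k + 1) := by
    calc x ^ (5 ^ k + 1) = x * x ^ 5 ^ k := by rw [pow_add, pow_one, mul_comm]
      _ = x ^ (5 ^ k * 5 ^ k) * x ^ 5 ^ k := by rw [hxq2]
      _ = x ^ (5 ^ k * 5 ^ k + 5 ^ k) := by rw [pow_add]
      _ = x ^ (5 ^ k * (5 ^ k + 1)) := by rw [show 5 ^ k * (5 ^ k + 1) = 5 ^ k * 5 ^ k + 5 ^ k by ring]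
      _ = y ^ (5 ^ k + 1) := by rw [pow_mul, ← hy]
  -- 5^k + 1 = 6*s + 2
  obtain ⟨m, hm⟩ := hke
  have hmod : 5 ^ k % 6 = 1 := by
    rw [show k = 2 * m by omega, pow_mul, Nat.pow_mod]
    norm_num
  obtain ⟨s, hs⟩ : ∃ s, 5 ^ k + 1 = 6 * s + 2 := ⟨5 ^ k / 6, by omega⟩
  have hsq : x ^ 2 = y ^ 2 := by
    have e : (x ^ 6) ^ s * x ^ 2 = (x ^ 6) ^ s * y ^ 2 := by
      calc (x ^ 6) ^ s * x ^ 2 = x ^ (6 * s + 2) := by rw [pow_add, pow_mul]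
        _ = x ^ (5 ^ k + 1) := by rw [← hs]
        _ = y ^ (5 ^ k + 1) := hnorm
        _ = (y ^ 6) ^ s * y ^ 2 := by rw [hs, pow_add, pow_mul]
        _ = (x ^ 6) ^ s * y ^ 2 := by rw [hsix]
    exact mul_left_cancel₀ (pow_ne_zero _ (pow_ne_zero _ hx0)) e
  have hy2x : y = 2 * x := by
    refine mul_left_cancel₀ hx0 ?_
    linear_combination -hquad - hsq
  have h3x : (3 : F) * x ^ 2 = 0 := by
    linear_combination -hsq - (y + 2 * x) * hy2x
  have h3ne : (3 : F) ≠ 0 := by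
    have h : ((3 : ℕ) : F) ≠ 0 := by
      rw [Ne, CharP.cast_eq_zero_iff F 5 3]
      norm_num
    exact_mod_cast h
  rcases mul_eq_zero.mp h3x with h | h
  · exact h3ne h
  · exact hx0 (pow_eq_zero_iff (n := 2) (by norm_num) |>.mp h)
end

section
/- Let q = 3^k. The trinomial f(x) = x^{2q+1} + x^{3q} - x^{q+2} is a permutation polynomial of F_{q^2} if and only if k is even. -/
/-!
Write `σ x = x ^ q`, an involutive automorphism of `F_{q²}`, so that
`f x = σx² x + σx³ - σx x²`. In characteristic 3 one finds `f x + σ (f x) = t³` and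
`σ (f x) - f x = r³ + t² r`, where `t = σx + x` and `r = σx - x`. Hence `f x = f y` forces equal
`t` (Frobenius is injective), and then, as `r ↦ r³ + t² r` is additive, `d = r_x - r_y` satisfies
`d (d² + t²) = 0`. A nonzero `d` makes `i = d / t` a square root of `-1` with `σ i = -i`;
conversely such an `i` gives the collision `f (i - 1) = f (-1)`. Finally `i ^ q = (-1)^k i`, so
such an `i` exists exactly when `k` is odd.
-/

open Function

/-- The paper's `x ^ (2q+1) + x ^ (3q) - x ^ (q+2)`, with `x ^ q` replaced by `σ x`. -/
def twistedTrinomial {R : Type*} [CommRing R] (σ : R →+* R) (x : R) : R :=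
  σ x ^ 2 * x + σ x ^ 3 - σ x * x ^ 2

section CharThree

variable {R : Type*} [CommRing R] [CharP R 3] {σ : R →+* R}

theorem twistedTrinomial_add_map (hσ : Involutive σ) (x : R) :
    twistedTrinomial σ x + σ (twistedTrinomial σ x) = (σ x + x) ^ 3 := by
  have h3 : (3 : R) = 0 := by exact_mod_cast CharP.cast_eq_zero R 3
  simp only [twistedTrinomial, map_sub, map_add, map_mul, map_pow, hσ x]
  linear_combination (-(σ x ^ 2 * x + σ x * x ^ 2)) * h3

theorem map_twistedTrinomial_sub (hσ : Involutive σ) (x : R) :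
    σ (twistedTrinomial σ x) - twistedTrinomial σ x =
      (σ x - x) ^ 3 + (σ x - x) * (σ x + x) ^ 2 := by
  have h3 : (3 : R) = 0 := by exact_mod_cast CharP.cast_eq_zero R 3
  simp only [twistedTrinomial, map_sub, map_add, map_mul, map_pow, hσ x]
  linear_combination (x ^ 3 - σ x ^ 3) * h3

end CharThree

theorem eq_zero_of_mul_sq_add_sq_eq_zero {F : Type*} [Field F] {σ : F →+* F}
    (hσ : ∀ i : F, i ^ 2 = -1 → σ i ≠ -i) {d t : F} (hd : σ d = -d) (ht : σ t = t)
    (hdt : d * (d ^ 2 + t ^ 2) = 0) : d = 0 := by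
  by_contra hd0
  have hsum : d ^ 2 + t ^ 2 = 0 := (mul_eq_zero.mp hdt).resolve_left hd0
  have ht0 : t ≠ 0 := by
    rintro rfl
    exact hd0 (pow_eq_zero_iff two_ne_zero |>.mp (by simpa using hsum))
  refine hσ (d / t) ?_ (by rw [map_div₀, hd, ht, neg_div])
  field_simp
  linear_combination hsum

theorem twistedTrinomial_injective_iff {F : Type*} [Field F] [CharP F 3] {σ : F →+* F}
    (hσ : Involutive σ) :
    Injective (twistedTrinomial σ) ↔ ∀ i : F, i ^ 2 = -1 → σ i ≠ -i := by
  have h3 : (3 : F) = 0 := by exact_mod_cast CharP.cast_eq_zero F 3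
  constructor
  · intro hinj i hi hσi
    have hcollide : twistedTrinomial σ (i - 1) = twistedTrinomial σ (-1) := by
      simp only [twistedTrinomial, map_sub, map_neg, map_one, hσi]
      linear_combination (i - 3) * hi + (1 - 2 * i) * h3
    have hi0 : i = 0 := by linear_combination hinj hcollide
    simp [hi0] at hi
  · intro hno x y hxy
    have htrace : σ x + x = σ y + y := frobenius_inj F 3 <| by
      simp only [frobenius_def, ← twistedTrinomial_add_map hσ, hxy]
    set d := (σ x - x) - (σ y - y) with hd_def
    have hd : σ d = -d := by simp only [hd_def, map_sub, hσ x, hσ y]; ring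
    have ht : σ (σ x + x) = σ x + x := by rw [map_add, hσ x, add_comm]
    have hdt : d * (d ^ 2 + (σ x + x) ^ 2) = 0 := by
      linear_combination map_twistedTrinomial_sub hσ y - map_twistedTrinomial_sub hσ x
        + congrArg (fun z => σ z - z) hxy - (σ y - y) * (σ x + x + σ y + y) * htrace
        + (σ x - x) * (σ y - y) * (σ y - y - (σ x - x)) * h3
    have hd0 := eq_zero_of_mul_sq_add_sq_eq_zero hno hd ht hdt
    linear_combination -htrace + hd0 + (x - y) * h3

theorem pow_three_pow_of_sq_eq_neg_one {R : Type*} [CommRing R] {i : R} (hi : i ^ 2 = -1)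
    (k : ℕ) : i ^ 3 ^ k = (-1) ^ k * i := by
  induction k with
  | zero => simp
  | succ k ih =>
    have hsign : ((-1 : R) ^ k) ^ 2 = 1 := by rw [← pow_mul, mul_comm, pow_mul]; simp
    rw [pow_succ, pow_mul, ih, pow_succ (-1 : R) k]
    linear_combination ((-1 : R) ^ k) ^ 3 * i * hi - (-1 : R) ^ k * i * hsign

theorem exists_sq_eq_neg_one_and_pow_three_pow_eq_neg_iff_odd {F : Type*} [Field F]
    (h2 : (2 : F) ≠ 0) (hsq : IsSquare (-1 : F)) (k : ℕ) :
    (∃ i : F, i ^ 2 = -1 ∧ i ^ 3 ^ k = -i) ↔ Odd k := by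
  constructor
  · rintro ⟨i, hi, hiq⟩
    by_contra hk
    rw [pow_three_pow_of_sq_eq_neg_one hi, (Nat.not_odd_iff_even.mp hk).neg_one_pow, one_mul]
      at hiq
    have h2i : (2 : F) * i = 0 := by linear_combination hiq
    simp [(mul_eq_zero.mp h2i).resolve_left h2] at hi
  · intro hk
    obtain ⟨i, hi⟩ := hsq
    have hi2 : i ^ 2 = -1 := by rw [sq, hi]
    exact ⟨i, hi2, by rw [pow_three_pow_of_sq_eq_neg_one hi2, hk.neg_one_pow, neg_one_mul]⟩

theorem iterateFrobenius_involutive {F : Type*} [Field F] [Fintype F] {p k : ℕ} [Fact p.Prime]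
    [CharP F p] (hF : Fintype.card F = (p ^ k) ^ 2) : Involutive (iterateFrobenius F p k) := by
  intro x
  rw [iterateFrobenius_def, iterateFrobenius_def, ← pow_mul, ← sq, ← hF, FiniteField.pow_card]

theorem stmt_14_general (k : ℕ) (F : Type*) [Field F] [Fintype F]
    (hF : Fintype.card F = (3 ^ k) ^ 2) :
    Function.Bijective
        (fun x : F => x ^ (2 * 3 ^ k + 1) + x ^ (3 * 3 ^ k) - x ^ (3 ^ k + 2)) ↔
      Even k := by
  have : Fact (Nat.Prime 3) := ⟨Nat.prime_three⟩
  have : CharP F 3 := charP_of_card_eq_prime_pow (hF.trans (pow_mul 3 k 2).symm)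
  have h2 : (2 : F) ≠ 0 := Ring.two_ne_zero (by rw [ringChar.eq F 3]; norm_num)
  have hsq : IsSquare (-1 : F) := by
    rw [FiniteField.isSquare_neg_one_iff, hF, ← pow_mul, mul_comm, pow_mul, Nat.pow_mod]
    norm_num
  have hf : (fun x : F => x ^ (2 * 3 ^ k + 1) + x ^ (3 * 3 ^ k) - x ^ (3 ^ k + 2)) =
      twistedTrinomial (iterateFrobenius F 3 k) := by
    funext x
    simp only [twistedTrinomial, iterateFrobenius_def]
    ring
  rw [hf, ← Finite.injective_iff_bijective,
    twistedTrinomial_injective_iff (iterateFrobenius_involutive hF), ← Nat.not_odd_iff_even,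
    ← exists_sq_eq_neg_one_and_pow_three_pow_eq_neg_iff_odd h2 hsq]
  simp [iterateFrobenius_def]

theorem stmt_14 (k : ℕ) (hk : 0 < k) (F : Type*) [Field F] [Fintype F]
    (hF : Fintype.card F = (3 ^ k) ^ 2) :
    Function.Bijective
        (fun x : F => x ^ (2 * 3 ^ k + 1) + x ^ (3 * 3 ^ k) - x ^ (3 ^ k + 2)) ↔
      Even k :=
  stmt_14_general k F hF
end

section
/- Let q = 5^k with k even. Then for every c in F_{q^2} with c + c^q ≠ 0 and c ∉ F_q, the quantity 3/(s+1), where s = N(c)/Tr(c)^2, is not a fourth power in F_q. -/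
/-!
Since the characteristic is 5, `N(c) + Tr(c)² = (c - c^q)² + 5 N(c) = (c - c^q)²`, so
`3 / (s + 1) = 3 Tr(c)² / (c - c^q)²`. If this were `w⁴` with `w ∈ F_q`, then
`z = (c - c^q) w² / Tr(c)` would satisfy `z² = 3` and `z^q = -z`. But `z⁸ = 81 = 1`, and
`q ≡ 1 (mod 8)` because `k` is even, so `z^q = z`; hence `z = 0`, contradicting `z² = 3`.
-/

section Frobenius

variable {R : Type*} [CommRing R] (p : ℕ) [Fact p.Prime] [CharP R p] {n : ℕ} {c : R}

theorem add_conj_pow_char_pow (hc : (c ^ p ^ n) ^ p ^ n = c) :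
    (c + c ^ p ^ n) ^ p ^ n = c + c ^ p ^ n := by
  rw [add_pow_char_pow, hc, add_comm]

theorem sub_conj_pow_char_pow (hc : (c ^ p ^ n) ^ p ^ n = c) :
    (c - c ^ p ^ n) ^ p ^ n = -(c - c ^ p ^ n) := by
  rw [sub_pow_char_pow, hc, neg_sub]

end Frobenius

theorem FiniteField.pow_pow_eq_self_of_card_eq_sq {F : Type*} [Field F] [Fintype F] {q : ℕ}
    (hF : Fintype.card F = q ^ 2) (c : F) : (c ^ q) ^ q = c := by
  rw [← pow_mul, ← sq, ← hF, FiniteField.pow_card]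

theorem five_pow_mod_eight_of_even {k : ℕ} (hk : Even k) : 5 ^ k % 8 = 1 := by
  obtain ⟨j, rfl⟩ := hk
  rw [← two_mul, pow_mul, Nat.pow_mod]
  norm_num

section CharFive

variable {F : Type*} [Field F] [CharP F 5]

theorem mul_div_add_sq_add_one_of_charP_five {a b : F} (hab : a + b ≠ 0) :
    a * b / (a + b) ^ 2 + 1 = (a - b) ^ 2 / (a + b) ^ 2 := by
  have h5 : (5 : F) = 0 := by exact_mod_cast CharP.cast_eq_zero F 5
  field_simp
  linear_combination (a * b) * h5

theorem sq_ne_three_of_pow_eq_neg {q : ℕ} (hq : q % 8 = 1) {z : F} (hz : z ^ q = -z) :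
    z ^ 2 ≠ 3 := by
  intro h3
  have h5 : (5 : F) = 0 := by exact_mod_cast CharP.cast_eq_zero F 5
  have h8 : z ^ 8 = 1 := by
    linear_combination (z ^ 6 + 3 * z ^ 4 + 9 * z ^ 2 + 27) * h3 + 16 * h5
  have hfix : z ^ q = z := by rw [pow_eq_pow_mod q h8, hq, pow_one]
  have : (1 : F) = 0 := by linear_combination z * (hfix.symm.trans hz) - 2 * h3 - h5
  exact one_ne_zero this

end CharFive

theorem stmt_18_general (k : ℕ) (hke : Even k) (F : Type*) [Field F] [Fintype F]
    (hF : Fintype.card F = (5 ^ k) ^ 2) (c : F) (hTr : c + c ^ (5 ^ k) ≠ 0)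
    (hc : c ^ (5 ^ k) ≠ c) :
    ¬ ∃ w : F, w ^ (5 ^ k) = w ∧
      w ^ 4 = 3 / (c * c ^ (5 ^ k) / (c + c ^ (5 ^ k)) ^ 2 + 1) := by
  rintro ⟨w, hwq, hw⟩
  have : Fact (Nat.Prime 5) := ⟨by norm_num⟩
  have : CharP F 5 := charP_of_card_eq_prime_pow (f := k * 2) (by rw [hF, pow_mul])
  have hconj := FiniteField.pow_pow_eq_self_of_card_eq_sq hF c
  have hD : c - c ^ 5 ^ k ≠ 0 := sub_ne_zero.mpr hc.symm
  rw [mul_div_add_sq_add_one_of_charP_five hTr] at hw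
  refine sq_ne_three_of_pow_eq_neg (five_pow_mod_eight_of_even hke)
    (z := (c - c ^ 5 ^ k) * w ^ 2 / (c + c ^ 5 ^ k)) ?_ ?_
  · rw [div_pow, mul_pow, ← pow_mul, mul_comm 2, pow_mul, hwq,
      add_conj_pow_char_pow 5 hconj, sub_conj_pow_char_pow 5 hconj]
    ring
  · rw [div_pow, mul_pow, ← pow_mul, hw]
    field_simp

theorem stmt_18 (k : ℕ) (hk : 0 < k) (hke : Even k) (F : Type*) [Field F] [Fintype F]
    (hF : Fintype.card F = (5 ^ k) ^ 2) (c : F) (hTr : c + c ^ (5 ^ k) ≠ 0)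
    (hc : c ^ (5 ^ k) ≠ c) :
    ¬ ∃ w : F, w ^ (5 ^ k) = w ∧
      w ^ 4 = 3 / (c * c ^ (5 ^ k) / (c + c ^ (5 ^ k)) ^ 2 + 1) :=
  stmt_18_general k hke F hF c hTr hc
end

section
/- Let p be a prime, n a positive integer, d a positive divisor of p^n - 1, r a positive integer, and h ∈ F_{p^n}[x]. Then x^r * h(x^{(p^n-1)/d}) is a permutation polynomial of F_{p^n} if and only if gcd(r, (p^n-1)/d) = 1 and the map x ↦ x^r * h(x)^{(p^n-1)/d} permutes the set μ_d of d-th roots of unity in F_{p^n}^*. -/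
theorem stmt_19 (p n : ℕ) (hp : p.Prime) (hn : 0 < n) (d r : ℕ)
    (hd : 0 < d) (hdvd : d ∣ p ^ n - 1) (hr : 0 < r) (F : Type*) [Field F] [Fintype F]
    (hF : Fintype.card F = p ^ n) (h : Polynomial F) :
    Function.Bijective (fun x : F => x ^ r * h.eval (x ^ ((p ^ n - 1) / d))) ↔
      Nat.gcd r ((p ^ n - 1) / d) = 1 ∧
        Set.BijOn (fun x : F => x ^ r * (h.eval x) ^ ((p ^ n - 1) / d))
          {x : F | x ≠ 0 ∧ x ^ d = 1} {x : F | x ≠ 0 ∧ x ^ d = 1} := by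
  classical
  have hq2 : 2 ≤ p ^ n := Nat.one_lt_pow hn.ne' hp.one_lt
  set q := p ^ n with hq
  set Q := q - 1 with hQdef
  have hQpos : 0 < Q := by omega
  set s := Q / d with hsdef
  have hds : d * s = Q := Nat.mul_div_cancel' hdvd
  have hspos : 0 < s := Nat.pos_of_ne_zero (fun h0 => by rw [h0, mul_zero] at hds; omega)
  have hsdvd : s ∣ Q := ⟨d, by rw [← hds, mul_comm]⟩
  have hcard : ∀ x : F, x ≠ 0 → x ^ Q = 1 := by
    intro x hx
    have := FiniteField.pow_card_sub_one_eq_one x hx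
    rwa [hF] at this
  obtain ⟨g, hg⟩ := IsCyclic.exists_generator (α := Fˣ)
  have hQcard : Fintype.card Fˣ = Q := by rw [Fintype.card_units, hF]
  have hog : orderOf g = Q := by
    rw [orderOf_eq_card_of_forall_mem_zpowers hg, Nat.card_eq_fintype_card, hQcard]
  -- surjectivity of the s-power map onto μ_d
  have hsurjpow : ∀ y : F, y ≠ 0 → y ^ d = 1 → ∃ x : F, x ≠ 0 ∧ x ^ s = y := by
    intro y hy hyd
    set u : Fˣ := Units.mk0 y hy with hu
    obtain ⟨k, hk0⟩ := hg u
    have hk : g ^ k = u := hk0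
    have hud : u ^ d = 1 := by
      apply Units.ext
      simpa [hu, Units.val_pow_eq_pow_val] using hyd
    have hQdvd : (Q : ℤ) ∣ k * d := by
      rw [← hog, orderOf_dvd_iff_zpow_eq_one, zpow_mul, hk]
      exact_mod_cast hud
    have hsk : (s : ℤ) ∣ k := by
      have hdz : (d : ℤ) ≠ 0 := by exact_mod_cast hd.ne'
      have hdsz : (d : ℤ) * s = (Q : ℤ) := by exact_mod_cast hds
      have : (d : ℤ) * s ∣ d * k := by rw [hdsz, mul_comm (d : ℤ) k]; exact hQdvd
      exact (mul_dvd_mul_iff_left hdz).mp this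
    obtain ⟨m, hm⟩ := hsk
    refine ⟨((g ^ m : Fˣ) : F), Units.ne_zero _, ?_⟩
    have : (g ^ m) ^ (s : ℕ) = u := by
      rw [← zpow_natCast (g ^ m) s, ← zpow_mul, mul_comm m (s : ℤ), ← hm, hk]
    calc ((g ^ m : Fˣ) : F) ^ s = (((g ^ m) ^ (s : ℕ) : Fˣ) : F) := by
          rw [Units.val_pow_eq_pow_val]
      _ = y := by rw [this]; rfl
  have hkey : ∀ x : F, (x ^ r * h.eval (x ^ s)) ^ s = (x ^ s) ^ r * (h.eval (x ^ s)) ^ s := by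
    intro x
    rw [mul_pow, ← pow_mul, ← pow_mul, mul_comm r s]
  have hmu : ∀ x : F, x ≠ 0 → (x ^ s ≠ 0 ∧ (x ^ s) ^ d = 1) := by
    intro x hx
    refine ⟨pow_ne_zero _ hx, ?_⟩
    rw [← pow_mul, mul_comm s d, hds]
    exact hcard x hx
  have hfin : ({x : F | x ≠ 0 ∧ x ^ d = 1}).Finite := Set.toFinite _
  constructor
  · intro hf
    have hf0 : (0 : F) ^ r * h.eval ((0 : F) ^ s) = 0 := by
      rw [zero_pow hr.ne', zero_mul]
    have hfne : ∀ x : F, x ≠ 0 → x ^ r * h.eval (x ^ s) ≠ 0 := by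
      intro x hx hc
      exact hx (hf.1 (show x ^ r * h.eval (x ^ s) = (0:F) ^ r * h.eval ((0:F) ^ s) by
        rw [hc, hf0]))
    have hgcd : Nat.gcd r s = 1 := by
      by_contra hne
      set e := Nat.gcd r s with he
      have hepos : 0 < e := Nat.gcd_pos_of_pos_left s hr
      have he1 : 1 < e := by omega
      have heQ : e ∣ Q := (Nat.gcd_dvd_right r s).trans hsdvd
      set ζ : F := ((g ^ (Q / e) : Fˣ) : F) with hζ
      have hζe : ζ ^ e = 1 := by
        rw [hζ, ← Units.val_pow_eq_pow_val, ← pow_mul, Nat.div_mul_cancel heQ,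
          ← hog, pow_orderOf_eq_one]
        rfl
      have hζ1 : ζ ≠ 1 := by
        intro hc
        have : g ^ (Q / e) = 1 := Units.ext (by simpa [hζ] using hc)
        have hdvd' : Q ∣ Q / e := by
          have := orderOf_dvd_of_pow_eq_one this
          rwa [hog] at this
        have hlt : Q / e < Q := Nat.div_lt_self hQpos he1
        have hpos' : 0 < Q / e := Nat.div_pos (Nat.le_of_dvd hQpos heQ) hepos
        exact absurd (Nat.le_of_dvd hpos' hdvd') (by omega)
      have hζr : ζ ^ r = 1 := by
        obtain ⟨c, hc⟩ := Nat.gcd_dvd_left r s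
        rw [hc, pow_mul, hζe, one_pow]
      have hζs : ζ ^ s = 1 := by
        obtain ⟨c, hc⟩ := Nat.gcd_dvd_right r s
        rw [hc, pow_mul, hζe, one_pow]
      have : ζ = 1 := hf.1 (show ζ ^ r * h.eval (ζ ^ s) = (1:F) ^ r * h.eval ((1:F) ^ s) by
        rw [hζr, hζs]; simp)
      exact hζ1 this
    have hmaps : Set.MapsTo (fun x : F => x ^ r * (h.eval x) ^ s)
        {x : F | x ≠ 0 ∧ x ^ d = 1} {x : F | x ≠ 0 ∧ x ^ d = 1} := by
      rintro y ⟨hy0, hyd⟩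
      obtain ⟨x, hx0, hxs⟩ := hsurjpow y hy0 hyd
      have hgy : y ^ r * (h.eval y) ^ s = (x ^ r * h.eval (x ^ s)) ^ s := by
        rw [hkey, hxs]
      have hfx := hfne x hx0
      constructor
      · simp only [Set.mem_setOf_eq]
        rw [hgy]
        exact pow_ne_zero _ hfx
      · show (y ^ r * (h.eval y) ^ s) ^ d = 1
        rw [hgy, ← pow_mul, mul_comm s d, hds]
        exact hcard _ hfx
    have hsurj : Set.SurjOn (fun x : F => x ^ r * (h.eval x) ^ s)
        {x : F | x ≠ 0 ∧ x ^ d = 1} {x : F | x ≠ 0 ∧ x ^ d = 1} := by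
      rintro z ⟨hz0, hzd⟩
      obtain ⟨w, hw0, hws⟩ := hsurjpow z hz0 hzd
      obtain ⟨x, hx⟩ := hf.2 w
      simp only at hx
      have hx0 : x ≠ 0 := by
        rintro rfl
        rw [hf0] at hx
        exact hw0 hx.symm
      refine ⟨x ^ s, hmu x hx0, ?_⟩
      show (x ^ s) ^ r * (h.eval (x ^ s)) ^ s = z
      rw [← hkey, hx, hws]
    exact ⟨hgcd, (Set.Finite.surjOn_iff_bijOn_of_mapsTo hfin hmaps).1 hsurj⟩
  · rintro ⟨hgcd, hbij⟩
    have hhne : ∀ y : F, y ≠ 0 → y ^ d = 1 → h.eval y ≠ 0 := by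
      intro y hy0 hyd hc
      have := hbij.mapsTo (show y ∈ {x : F | x ≠ 0 ∧ x ^ d = 1} from ⟨hy0, hyd⟩)
      obtain ⟨hne, -⟩ := this
      apply hne
      show y ^ r * (h.eval y) ^ s = 0
      rw [hc, zero_pow hspos.ne', mul_zero]
    have hfne : ∀ x : F, x ≠ 0 → x ^ r * h.eval (x ^ s) ≠ 0 := by
      intro x hx
      obtain ⟨hs0, hsd⟩ := hmu x hx
      exact mul_ne_zero (pow_ne_zero _ hx) (hhne _ hs0 hsd)
    have hinj : Function.Injective (fun x : F => x ^ r * h.eval (x ^ s)) := by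
      intro a b hab
      simp only at hab
      by_cases ha : a = 0
      · subst ha
        by_contra hb
        have hb0 : b ≠ 0 := fun hc => hb hc.symm
        rw [zero_pow hr.ne', zero_mul] at hab
        exact hfne b hb0 hab.symm
      by_cases hb : b = 0
      · subst hb
        rw [zero_pow hr.ne', zero_mul] at hab
        exact absurd hab (hfne a ha)
      have hab' : (a ^ s) ^ r * (h.eval (a ^ s)) ^ s = (b ^ s) ^ r * (h.eval (b ^ s)) ^ s := by
        rw [← hkey, ← hkey, hab]
      have hss : a ^ s = b ^ s :=
        hbij.injOn (hmu a ha) (hmu b hb) hab'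
      have hrr : a ^ r = b ^ r := by
        rw [hss] at hab
        obtain ⟨hs0, hsd⟩ := hmu b hb
        exact mul_right_cancel₀ (hhne _ hs0 hsd) hab
      -- conclude a = b using gcd r s = 1
      set u : Fˣ := Units.mk0 a ha with hu
      set v : Fˣ := Units.mk0 b hb with hv
      have hur : u ^ r = v ^ r := Units.ext (by
        simp only [Units.val_pow_eq_pow_val, hu, hv, Units.val_mk0]; exact hrr)
      have hus : u ^ s = v ^ s := Units.ext (by
        simp only [Units.val_pow_eq_pow_val, hu, hv, Units.val_mk0]; exact hss)
      have hcr : (u * v⁻¹) ^ r = 1 := by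
        rw [mul_pow, inv_pow, hur, mul_inv_cancel]
      have hcs : (u * v⁻¹) ^ s = 1 := by
        rw [mul_pow, inv_pow, hus, mul_inv_cancel]
      have hord : orderOf (u * v⁻¹) ∣ Nat.gcd r s :=
        Nat.dvd_gcd (orderOf_dvd_of_pow_eq_one hcr) (orderOf_dvd_of_pow_eq_one hcs)
      rw [hgcd, Nat.dvd_one, orderOf_eq_one_iff] at hord
      have huv : u = v := by
        rwa [mul_inv_eq_one] at hord
      have : (u : F) = (v : F) := by rw [huv]
      simpa [hu, hv] using this
    exact Finite.injective_iff_bijective.1 hinj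
end
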